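/- Let $K$ be a field of characteristic $0$, let $P \in K[X]$ be a monic irreducible polynomial of odd degree $n \geq 3$ whose discriminant $\Delta(P)$ is a nonzero square in $K$, and suppose $Q, R \in K[X]$ are nonzero of degree at most $n-1$ with $P Q' - P' Q = R^2$. Then for every $t \in K$, the discriminant $\Delta(P - tQ)$ is a square in $K$. -/

import Mathlib

/-!
Put `f_t = P - tQ`. The Wronskian condition is unchanged when `P` is replaced by `f_t`, so at
every root `α` of `f_t` it reads `f_t'(α) Q(α) = -R(α)²`; multiplying over the roots gives
`Res(f_t, f_t') Res(f_t, Q) = ± Res(f_t, R)²`. Since `Res(f_t, Q) = Res(P, Q)` does not depend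
on `t`, the discriminant `Δ(f_t)` is a fixed constant `c ≠ 0` times the square of
`Res(f_t, R) ∈ K`, and `t = 0` shows that `c` is a square in `K`.
-/

open Polynomial

/-- The resultant of two polynomials over a field `K`, computed via the roots of the first
polynomial in an algebraic closure: `Res(f,g) = lc(f)^(deg g) * ∏_{f(α)=0} g(α)`. -/
noncomputable def polyRes {K : Type*} [Field K] (f g : K[X]) : AlgebraicClosure K :=
  algebraMap K (AlgebraicClosure K) f.leadingCoeff ^ g.natDegree *
    (((f.map (algebraMap K (AlgebraicClosure K))).roots).map fun α => aeval α g).prod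

/-- The discriminant of a polynomial over a field `K`:
`Δ(f) = (-1)^(n(n-1)/2) Res(f, f') / lc(f)`. -/
noncomputable def polyDisc {K : Type*} [Field K] (f : K[X]) : AlgebraicClosure K :=
  (-1) ^ (f.natDegree * (f.natDegree - 1) / 2) *
    (algebraMap K (AlgebraicClosure K) f.leadingCoeff)⁻¹ * polyRes f (derivative f)

lemma sub_C_mul_wronskian {R : Type*} [CommRing R] (f g : R[X]) (t : R) :
    (f - C t * g) * derivative g - derivative (f - C t * g) * g =
      f * derivative g - derivative f * g := by
  rw [derivative_sub, derivative_C_mul]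
  ring

section Resultant

variable {K : Type*} [Field K]

lemma polyRes_eq_algebraMap_resultant (f g : K[X]) :
    polyRes f g = algebraMap K (AlgebraicClosure K) (f.resultant g) := by
  have h := resultant_eq_prod_eval (f.map (algebraMap K (AlgebraicClosure K)))
    (g.map (algebraMap K (AlgebraicClosure K))) g.natDegree natDegree_map_le
    (IsAlgClosed.splits _)
  rw [natDegree_map, resultant_map_map, leadingCoeff_map] at h
  simp only [h, polyRes, eval_map_algebraMap]

lemma polyRes_ne_zero_of_irreducible {f g : K[X]} (hf : Irreducible f) (hg : g ≠ 0)
    (hdeg : g.natDegree < f.natDegree) : polyRes f g ≠ 0 := by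
  rw [polyRes_eq_algebraMap_resultant, _root_.map_ne_zero]
  refine resultant_ne_zero f g (hf.coprime_iff_not_dvd.mpr fun hdvd => ?_)
  exact (natDegree_le_of_dvd hdvd hg).not_gt hdeg

lemma polyRes_sub_C_mul_left (f g : K[X]) (t : K) (hdeg : g.natDegree < f.natDegree) :
    polyRes (f - C t * g) g = polyRes f g := by
  have hsub : (f - C t * g).natDegree = f.natDegree :=
    natDegree_sub_eq_left_of_natDegree_lt ((natDegree_C_mul_le t g).trans_lt hdeg)
  rw [polyRes_eq_algebraMap_resultant, polyRes_eq_algebraMap_resultant, hsub,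
    show f - C t * g = f + g * C (-t) by rw [C_neg]; ring,
    resultant_add_mul_left _ _ _ _ _ (by simpa using hdeg.le) le_rfl]

lemma Polynomial.Monic.polyRes_eq_prod {f : K[X]} (hf : f.Monic) (g : K[X]) :
    polyRes f g =
      (((f.map (algebraMap K (AlgebraicClosure K))).roots).map fun α => aeval α g).prod := by
  simp [polyRes, hf.leadingCoeff]

lemma Polynomial.Monic.polyDisc_eq {f : K[X]} (hf : f.Monic) :
    polyDisc f = (-1) ^ (f.natDegree * (f.natDegree - 1) / 2) * polyRes f (derivative f) := by
  simp [polyDisc, hf.leadingCoeff]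

lemma Polynomial.Monic.polyRes_derivative_mul_polyRes_of_wronskian {f Q R : K[X]} (hf : f.Monic)
    (hW : f * derivative Q - derivative f * Q = R ^ 2) :
    polyRes f (derivative f) * polyRes f Q = (-1) ^ f.natDegree * polyRes f R ^ 2 := by
  set S := (f.map (algebraMap K (AlgebraicClosure K))).roots
  have hroot : ∀ α ∈ S, aeval α (derivative f) * aeval α Q = -1 * aeval α R ^ 2 := by
    intro α hα
    have hfα : aeval α f = 0 := by
      simpa [eval_map_algebraMap] using (mem_roots (hf.map _).ne_zero).mp hα
    have := congrArg (aeval α) hW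
    simp only [map_sub, map_mul, map_pow, hfα, zero_mul, zero_sub] at this
    linear_combination -this
  have hcard : Multiset.card S = f.natDegree := by
    rw [← (IsAlgClosed.splits _).natDegree_eq_card_roots, hf.natDegree_map]
  rw [hf.polyRes_eq_prod, hf.polyRes_eq_prod, hf.polyRes_eq_prod, ← Multiset.prod_map_mul,
    Multiset.map_congr rfl hroot, Multiset.prod_map_mul, Multiset.map_const',
    Multiset.prod_replicate, hcard, Multiset.prod_map_pow]

lemma Polynomial.Monic.polyDisc_mul_polyRes_of_wronskian {f Q R : K[X]} (hf : f.Monic)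
    (hW : f * derivative Q - derivative f * Q = R ^ 2) :
    polyDisc f * polyRes f Q =
      (-1) ^ (f.natDegree * (f.natDegree - 1) / 2 + f.natDegree) * polyRes f R ^ 2 := by
  rw [hf.polyDisc_eq, mul_assoc, hf.polyRes_derivative_mul_polyRes_of_wronskian hW, pow_add]
  ring

lemma polyDisc_sub_C_mul_mul_polyRes {P Q R : K[X]} (hP : P.Monic)
    (hdeg : Q.natDegree < P.natDegree) (hW : P * derivative Q - derivative P * Q = R ^ 2)
    (t : K) :
    polyDisc (P - C t * Q) * polyRes P Q =
      (-1) ^ (P.natDegree * (P.natDegree - 1) / 2 + P.natDegree) *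
        polyRes (P - C t * Q) R ^ 2 := by
  have hlt : (C t * Q).natDegree < P.natDegree := (natDegree_C_mul_le t Q).trans_lt hdeg
  have hPt : (P - C t * Q).Monic := hP.sub_of_left (degree_lt_degree hlt)
  rw [← polyRes_sub_C_mul_left P Q t hdeg,
    hPt.polyDisc_mul_polyRes_of_wronskian ((sub_C_mul_wronskian P Q t).trans hW),
    natDegree_sub_eq_left_of_natDegree_lt hlt]

end Resultant

theorem stmt7_general {K : Type*} [Field K] {n : ℕ}
    (P Q R : K[X]) (hPm : P.Monic) (hPirr : Irreducible P) (hPdeg : P.natDegree = n)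
    (hPdisc : ∃ s : K, s ≠ 0 ∧ polyDisc P = algebraMap K (AlgebraicClosure K) s ^ 2)
    (hQ : Q ≠ 0) (hR : R ≠ 0)
    (hQdeg : Q.natDegree ≤ n - 1) (hRdeg : R.natDegree ≤ n - 1)
    (hW : P * derivative Q - derivative P * Q = R ^ 2) :
    ∀ t : K, ∃ s : K,
      polyDisc (P - C t * Q) = algebraMap K (AlgebraicClosure K) s ^ 2 := by
  obtain ⟨s, -, hs⟩ := hPdisc
  have hQlt : Q.natDegree < P.natDegree := by
    have := hPirr.natDegree_pos
    omega
  have hc : polyRes P Q ≠ 0 := polyRes_ne_zero_of_irreducible hPirr hQ hQlt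
  have hρ : polyRes P R ≠ 0 := polyRes_ne_zero_of_irreducible hPirr hR (by omega)
  have key := polyDisc_sub_C_mul_mul_polyRes hPm hQlt hW
  have key₀ := key 0
  rw [map_zero, zero_mul, sub_zero, hs] at key₀
  intro t
  refine ⟨s * (P - C t * Q).resultant R / P.resultant R, ?_⟩
  rw [map_div₀, map_mul, ← polyRes_eq_algebraMap_resultant, ← polyRes_eq_algebraMap_resultant]
  field_simp
  apply mul_right_cancel₀ hc
  linear_combination polyRes P R ^ 2 * key t - polyRes (P - C t * Q) R ^ 2 * key₀

theorem stmt7 {K : Type*} [Field K] [CharZero K] {n : ℕ} (hn : Odd n) (hn3 : 3 ≤ n)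
    (P Q R : K[X]) (hPm : P.Monic) (hPirr : Irreducible P) (hPdeg : P.natDegree = n)
    (hPdisc : ∃ s : K, s ≠ 0 ∧ polyDisc P = algebraMap K (AlgebraicClosure K) s ^ 2)
    (hQ : Q ≠ 0) (hR : R ≠ 0)
    (hQdeg : Q.natDegree ≤ n - 1) (hRdeg : R.natDegree ≤ n - 1)
    (hW : P * derivative Q - derivative P * Q = R ^ 2) :
    ∀ t : K, ∃ s : K,
      polyDisc (P - C t * Q) = algebraMap K (AlgebraicClosure K) s ^ 2 :=
  stmt7_general P Q R hPm hPirr hPdeg hPdisc hQ hR hQdeg hRdeg hW
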